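/- arXiv:2511.10103 — 2 statements merged into one kernel-verified Lean document; each statement's English description precedes it below -/
import Mathlib

section
/- The derivative-in-H bound for the second-difference kernel: for |s| ≥ 3 and H ∈ (0,1), |∂_H ḡ(s,H)| ≤ C(1 + log|s|)·|s|^{H-5/2} for a constant C independent of s and H, where ḡ(s,H) = (-s)_+^{H-1/2} - 2(-1-s)_+^{H-1/2} + (-2-s)_+^{H-1/2}. -/
/-- Second-order difference of the Mandelbrot–van Ness kernel:
`ḡ(s,H) = (-s)_+^{H-1/2} - 2(-1-s)_+^{H-1/2} + (-2-s)_+^{H-1/2}`. -/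
noncomputable def gbar (s H : ℝ) : ℝ :=
  (max (-s) 0) ^ (H - 1 / 2) - 2 * (max (-1 - s) 0) ^ (H - 1 / 2)
    + (max (-2 - s) 0) ^ (H - 1 / 2)

/-!
For `s ≥ 0` the kernel vanishes identically in `H`. For `s = -t` with `t ≥ 3` all three bases are
positive and, with `a = H - 1/2` and `φ(x) = log x · x^a`, `∂_H ḡ(s,H) = φ(t) - 2φ(t-1) + φ(t-2)`.
This second difference is at most `sup |φ''|` on `[t-2, t]`, where
`φ''(x) = x^(a-2) (2a - 1 + a(a-1) log x)` is `O((1 + log t) t^(a-2))` because `|a| < 1/2` and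
`x ≥ t/3`.
-/

open Real Set

theorem abs_second_difference_le {f f' f'' : ℝ → ℝ} {x h M : ℝ} (hh : 0 ≤ h)
    (hf : ∀ y ∈ Icc x (x + 2 * h), HasDerivAt f (f' y) y)
    (hf' : ∀ y ∈ Icc x (x + 2 * h), HasDerivAt f' (f'' y) y)
    (hM : ∀ y ∈ Icc x (x + 2 * h), |f'' y| ≤ M) :
    |f (x + 2 * h) - 2 * f (x + h) + f x| ≤ M * h ^ 2 := by
  have hshift : ∀ y ∈ Icc x (x + h), Icc y (y + h) ⊆ Icc x (x + 2 * h) := fun y hy =>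
    Icc_subset_Icc hy.1 (by linarith [hy.2])
  have hderiv_bound : ∀ y ∈ Icc x (x + h), |f' (y + h) - f' y| ≤ M * h := by
    intro y hy
    simpa using norm_image_sub_le_of_norm_deriv_le_segment'
      (fun z hz => (hf' z (hshift y hy hz)).hasDerivWithinAt)
      (fun z hz => hM z (hshift y hy (Ico_subset_Icc_self hz))) (y + h)
      (right_mem_Icc.2 (by linarith))
  have hderiv : ∀ y ∈ Icc x (x + h),
      HasDerivAt (fun z => f (z + h) - f z) (f' (y + h) - f' y) y := fun y hy =>
    (HasDerivAt.comp_add_const y h (hf (y + h) (hshift y hy ⟨by linarith, le_rfl⟩))).sub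
      (hf y (hshift y hy (left_mem_Icc.2 (by linarith))))
  have key := norm_image_sub_le_of_norm_deriv_le_segment'
    (fun y hy => (hderiv y hy).hasDerivWithinAt)
    (fun y hy => hderiv_bound y (Ico_subset_Icc_self hy)) (x + h)
    (right_mem_Icc.2 (by linarith))
  calc |f (x + 2 * h) - 2 * f (x + h) + f x|
      = ‖(f (x + h + h) - f (x + h)) - (f (x + h) - f x)‖ := by
        rw [Real.norm_eq_abs, add_assoc, ← two_mul]; ring_nf
    _ ≤ M * h * (x + h - x) := key
    _ = M * h ^ 2 := by ring

theorem hasDerivAt_log_mul_rpow {a x : ℝ} (hx : 0 < x) :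
    HasDerivAt (fun y => log y * y ^ a) (x ^ (a - 1) * (1 + a * log x)) x := by
  refine ((hasDerivAt_log hx.ne').mul
    (hasDerivAt_rpow_const (p := a) (Or.inl hx.ne'))).congr_deriv ?_
  rw [rpow_sub_one hx.ne']
  field_simp

theorem hasDerivAt_rpow_sub_one_mul_one_add_mul_log {a x : ℝ} (hx : 0 < x) :
    HasDerivAt (fun y => y ^ (a - 1) * (1 + a * log y))
      (x ^ (a - 2) * (2 * a - 1 + a * (a - 1) * log x)) x := by
  refine ((hasDerivAt_rpow_const (p := a - 1) (Or.inl hx.ne')).mul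
    (((hasDerivAt_log hx.ne').const_mul a).const_add 1)).congr_deriv ?_
  rw [show a - 1 - 1 = a - 2 by ring, show a - 1 = a - 2 + 1 by ring, rpow_add_one hx.ne']
  field_simp
  ring

theorem abs_two_mul_sub_one_add_mul_log_le {a L : ℝ} (ha : |a| ≤ 1 / 2) (hL : 0 ≤ L) :
    |2 * a - 1 + a * (a - 1) * L| ≤ 2 * (1 + L) := by
  obtain ⟨ha₁, ha₂⟩ := abs_le.mp ha
  have hb₁ : a * (a - 1) ≤ 1 := by nlinarith
  have hb₂ : -1 ≤ a * (a - 1) := by nlinarith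
  rw [abs_le]
  constructor <;>
    nlinarith [mul_le_mul_of_nonneg_right hb₁ hL, mul_le_mul_of_nonneg_right hb₂ hL]

theorem rpow_le_of_div_three_le {b t x : ℝ} (hb : -3 ≤ b) (hb' : b ≤ 0) (ht : 0 < t)
    (hx : t / 3 ≤ x) : x ^ b ≤ 27 * t ^ b :=
  calc x ^ b ≤ (t / 3) ^ b := rpow_le_rpow_of_nonpos (by positivity) hx hb'
    _ = 3 ^ (-b) * t ^ b := by
        rw [div_rpow ht.le (by norm_num), div_eq_mul_inv, ← rpow_neg (by norm_num), mul_comm]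
    _ ≤ 3 ^ (3 : ℝ) * t ^ b := by
        gcongr
        · norm_num
        · linarith
    _ = 27 * t ^ b := by norm_num

theorem abs_second_difference_log_mul_rpow_le {a t : ℝ} (ha : |a| ≤ 1 / 2) (ht : 3 ≤ t) :
    |log t * t ^ a - 2 * (log (t - 1) * (t - 1) ^ a) + log (t - 2) * (t - 2) ^ a|
      ≤ 54 * (1 + log t) * t ^ (a - 2) := by
  obtain ⟨ha₁, ha₂⟩ := abs_le.mp ha
  have hsecond_deriv_bound : ∀ y ∈ Icc (t - 2) (t - 2 + 2 * 1),
      |y ^ (a - 2) * (2 * a - 1 + a * (a - 1) * log y)| ≤ 54 * (1 + log t) * t ^ (a - 2) := by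
    rintro y ⟨hy₁, hy₂⟩
    have hy : 0 < y := by linarith
    have hlog : 0 ≤ log y := log_nonneg (by linarith)
    have hlog_le : log y ≤ log t := log_le_log hy (by linarith)
    calc |y ^ (a - 2) * (2 * a - 1 + a * (a - 1) * log y)|
        = y ^ (a - 2) * |2 * a - 1 + a * (a - 1) * log y| := by
          rw [abs_mul, abs_of_pos (rpow_pos_of_pos hy _)]
      _ ≤ (27 * t ^ (a - 2)) * (2 * (1 + log t)) := by
          gcongr
          · exact rpow_le_of_div_three_le (by linarith) (by linarith) (by linarith) (by linarith)
          · exact (abs_two_mul_sub_one_add_mul_log_le ha hlog).trans (by linarith)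
      _ = 54 * (1 + log t) * t ^ (a - 2) := by ring
  have key := abs_second_difference_le zero_le_one
    (fun y hy => hasDerivAt_log_mul_rpow (a := a) (by linarith [hy.1]))
    (fun y hy => hasDerivAt_rpow_sub_one_mul_one_add_mul_log (by linarith [hy.1]))
    hsecond_deriv_bound
  rwa [show t - 2 + 2 * 1 = t by ring, show t - 2 + 1 = t - 1 by ring, one_pow, mul_one] at key

theorem gbar_of_nonneg {s : ℝ} (hs : 0 ≤ s) (H : ℝ) : gbar s H = 0 := by
  simp only [gbar, max_eq_right (by linarith : -s ≤ 0), max_eq_right (by linarith : -1 - s ≤ 0),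
    max_eq_right (by linarith : -2 - s ≤ 0)]
  ring

theorem hasDerivAt_gbar_neg {t : ℝ} (ht : 2 < t) (H : ℝ) :
    HasDerivAt (fun H' => gbar (-t) H')
      (log t * t ^ (H - 1 / 2) - 2 * (log (t - 1) * (t - 1) ^ (H - 1 / 2))
        + log (t - 2) * (t - 2) ^ (H - 1 / 2)) H := by
  have hbase : ∀ c : ℝ, 0 < c →
      HasDerivAt (fun H' : ℝ => c ^ (H' - 1 / 2)) (log c * c ^ (H - 1 / 2)) H := fun c hc => by
    simpa using ((hasDerivAt_id H).sub_const (1 / 2 : ℝ)).const_rpow hc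
  have hgbar : (fun H' => gbar (-t) H')
      = fun H' => t ^ (H' - 1 / 2) - 2 * (t - 1) ^ (H' - 1 / 2) + (t - 2) ^ (H' - 1 / 2) := by
    funext H'
    rw [gbar, neg_neg, max_eq_left (by linarith), max_eq_left (by linarith),
      max_eq_left (by linarith), sub_neg_eq_add, sub_neg_eq_add, neg_add_eq_sub, neg_add_eq_sub]
  rw [hgbar]
  exact ((hbase t (by linarith)).sub ((hbase (t - 1) (by linarith)).const_mul 2)).add
    (hbase (t - 2) (by linarith))

/-- Derivative-in-`H` bound for the second-difference kernel: there is a constant `C`,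
independent of `s` and `H`, such that for `|s| ≥ 3` and `H ∈ (0,1)`,
`|∂_H ḡ(s,H)| ≤ C (1 + log |s|) |s|^{H-5/2}`. -/
theorem gbar_deriv_decay :
    ∃ C : ℝ, 0 < C ∧ ∀ s H : ℝ, 3 ≤ |s| → H ∈ Set.Ioo (0 : ℝ) 1 →
      |deriv (fun H' => gbar s H') H| ≤ C * (1 + Real.log |s|) * |s| ^ (H - 5 / 2) := by
  refine ⟨54, by norm_num, fun s H hs hH => ?_⟩
  rcases le_or_gt 0 s with hs₀ | hs₀
  · have hlog : 0 ≤ log |s| := log_nonneg (by linarith)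
    simp only [gbar_of_nonneg hs₀, deriv_const', abs_zero]
    positivity
  · obtain ⟨t, rfl⟩ : ∃ t, s = -t := ⟨-s, by ring⟩
    have ht : |-t| = t := by rw [abs_neg, abs_of_pos (by linarith)]
    rw [ht] at hs ⊢
    rw [(hasDerivAt_gbar_neg (by linarith) H).deriv, show H - 5 / 2 = H - 1 / 2 - 2 by ring]
    exact abs_second_difference_log_mul_rpow_le (a := H - 1 / 2)
      (abs_le.2 ⟨by linarith [hH.1], by linarith [hH.2]⟩) hs
end

section
/- Let (Z_i)_{i=1}^n be real random variables with |Cov(Z_i, Z_j)| ≤ K·(|i-j| ∨ 1)^{-3} for all i,j, and let weights w_i satisfy |w_i| ≤ C/(nb), w_i = 0 for |i/n - u| > b, where nb ≥ 1. Then Var(Σ_i w_i Z_i) ≤ C'·/(nb) for a constant C' depending only on C and K. -/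
/-!
Expanding bilinearly, `Var(∑ wᵢ Zᵢ) = ∑_{i,j} wᵢ wⱼ Cov(Zᵢ, Zⱼ) ≤ ∑ᵢ |wᵢ| · (C/(nb)) · |K| S`
with `S = ∑_{k ∈ ℤ} (|k| ∨ 1)^{-3} < ∞`: for fixed `i`, the decay exponent `3 > 1` makes the
covariances summable in `j` uniformly in `i`. The weights vanish outside the window
`[n(u-b), n(u+b)]`, which holds at most `2nb + 1 ≤ 3nb` integers, so `∑ᵢ |wᵢ| ≤ 3C` and
`Var(∑ wᵢ Zᵢ) ≤ 3C²|K|S/(nb)`.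
-/

open MeasureTheory

/-- Covariance of two real random variables. -/
noncomputable def cov' {Ω : Type*} [MeasurableSpace Ω] (P : Measure Ω) (X Y : Ω → ℝ) : ℝ :=
  ∫ ω, (X ω - ∫ x, X x ∂P) * (Y ω - ∫ x, Y x ∂P) ∂P

open ProbabilityTheory Finset

theorem cov'_eq_covariance {Ω : Type*} [MeasurableSpace Ω] (P : Measure Ω) (X Y : Ω → ℝ) :
    cov' P X Y = cov[X, Y; P] :=
  rfl

theorem summable_max_abs_one_rpow_neg {p : ℝ} (hp : 1 < p) :
    Summable fun k : ℤ => (max |(k : ℝ)| 1) ^ (-p) := by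
  refine (Real.summable_abs_int_rpow hp).of_norm_bounded_eventually ?_
  filter_upwards [Filter.eventually_cofinite_ne 0] with k hk
  have hk1 : 1 ≤ |(k : ℝ)| := by exact_mod_cast Int.one_le_abs hk
  rw [max_eq_left hk1, Real.norm_of_nonneg (by positivity)]

theorem sum_comp_natCast_sub_le_tsum {ρ : ℤ → ℝ} (hρ : Summable ρ) (hρ0 : 0 ≤ ρ)
    (s : Finset ℕ) (i : ℕ) : ∑ j ∈ s, ρ (j - i) ≤ ∑' k, ρ k := by
  have hinj : Function.Injective fun j : ℕ => (j : ℤ) - i := fun a b h => by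
    simpa using h
  simpa using hρ.sum_le_tsum (s.map ⟨_, hinj⟩) fun k _ => hρ0 k

theorem card_le_of_forall_mem_Icc {t : Finset ℕ} {x y : ℝ} (hxy : x ≤ y)
    (ht : ∀ i ∈ t, (i : ℝ) ∈ Set.Icc x y) : (#t : ℝ) ≤ y - x + 1 := by
  rcases t.eq_empty_or_nonempty with rfl | hne
  · rw [card_empty, Nat.cast_zero]; linarith
  have hsub : t ⊆ Icc (t.min' hne) (t.max' hne) := fun i hi =>
    mem_Icc.2 ⟨t.min'_le i hi, t.le_max' i hi⟩
  have hcard : (#t : ℝ) ≤ (t.max' hne : ℝ) + 1 - t.min' hne := by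
    have := card_le_card hsub
    rw [Nat.card_Icc] at this
    have : (#t : ℝ) ≤ ((t.max' hne + 1 - t.min' hne : ℕ) : ℝ) := by exact_mod_cast this
    rwa [Nat.cast_sub (by have := t.min'_le_max' hne; omega), Nat.cast_add_one] at this
  linarith [(ht _ (t.max'_mem hne)).2, (ht _ (t.min'_mem hne)).1]

theorem sum_abs_le_of_eq_zero_of_notMem_Icc {s : Finset ℕ} {w : ℕ → ℝ} {x y W : ℝ}
    (hxy : x ≤ y) (hw : ∀ i, |w i| ≤ W) (hsupp : ∀ i : ℕ, (i : ℝ) ∉ Set.Icc x y → w i = 0) :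
    ∑ i ∈ s, |w i| ≤ (y - x + 1) * W := by
  classical
  have hW : 0 ≤ W := (abs_nonneg _).trans (hw 0)
  calc ∑ i ∈ s, |w i| = ∑ i ∈ s.filter fun i : ℕ => (i : ℝ) ∈ Set.Icc x y, |w i| := by
        rw [sum_filter_of_ne]
        intro i _ hi
        by_contra h
        exact hi (by rw [hsupp i h, abs_zero])
    _ ≤ #(s.filter fun i : ℕ => (i : ℝ) ∈ Set.Icc x y) * W := by
        simpa using sum_le_card_nsmul _ _ W (fun i _ => hw i)
    _ ≤ (y - x + 1) * W := by
        gcongr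
        exact card_le_of_forall_mem_Icc hxy fun i hi => (mem_filter.1 hi).2

theorem covariance_weighted_sum_self_le {Ω : Type*} [MeasurableSpace Ω] {P : Measure Ω}
    [IsFiniteMeasure P] {Z : ℕ → Ω → ℝ} {s : Finset ℕ} (hZ : ∀ i ∈ s, MemLp (Z i) 2 P)
    {ρ : ℤ → ℝ} (hρ : Summable ρ) (hρ0 : 0 ≤ ρ) (hcov : ∀ i j : ℕ, |cov[Z i, Z j; P]| ≤ ρ (j - i))
    {w : ℕ → ℝ} {W : ℝ} (hw : ∀ i, |w i| ≤ W) :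
    cov[fun ω => ∑ i ∈ s, w i * Z i ω, fun ω => ∑ i ∈ s, w i * Z i ω; P]
      ≤ (∑ i ∈ s, |w i|) * W * ∑' k, ρ k := by
  have hW : 0 ≤ W := (abs_nonneg _).trans (hw 0)
  have hwZ : ∀ i ∈ s, MemLp (fun ω => w i * Z i ω) 2 P := fun i hi => (hZ i hi).const_mul _
  have hterm : ∀ i j : ℕ, w i * w j * cov[Z i, Z j; P] ≤ |w i| * (W * ρ (j - i)) := by
    intro i j
    calc w i * w j * cov[Z i, Z j; P] ≤ |w i| * (|w j| * |cov[Z i, Z j; P]|) := by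
          rw [← abs_mul, ← abs_mul, ← mul_assoc]; exact le_abs_self _
      _ ≤ |w i| * (W * ρ (j - i)) := by gcongr; exacts [hw j, hcov i j]
  rw [covariance_fun_sum_fun_sum' hwZ hwZ, sum_mul, sum_mul]
  refine sum_le_sum fun i _ => ?_
  calc ∑ j ∈ s, cov[fun ω => w i * Z i ω, fun ω => w j * Z j ω; P]
      = ∑ j ∈ s, w i * w j * cov[Z i, Z j; P] := by
        refine sum_congr rfl fun j _ => ?_
        rw [covariance_const_mul_left, covariance_const_mul_right, mul_assoc]
    _ ≤ ∑ j ∈ s, |w i| * (W * ρ (j - i)) := sum_le_sum fun j _ => hterm i j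
    _ = |w i| * W * ∑ j ∈ s, ρ (j - i) := by rw [← mul_sum, ← mul_sum, mul_assoc]
    _ ≤ |w i| * W * ∑' k, ρ k := by gcongr; exact sum_comp_natCast_sub_le_tsum hρ hρ0 s i

theorem mem_Icc_of_abs_div_sub_le {x n u b : ℝ} (hn : 0 < n) (h : |x / n - u| ≤ b) :
    x ∈ Set.Icc (n * (u - b)) (n * (u + b)) := by
  rw [abs_le] at h
  constructor
  · rw [← le_div_iff₀' hn]; linarith
  · rw [← div_le_iff₀' hn]; linarith

theorem localized_variance_bound_general (C K : ℝ) :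
    ∃ C' : ℝ, ∀ (Ω : Type) [MeasurableSpace Ω] (P : Measure Ω), IsProbabilityMeasure P →
      ∀ (n : ℕ) (b u : ℝ) (Z : ℕ → Ω → ℝ) (w : ℕ → ℝ),
      1 ≤ n → 0 < b → b < 1 → u ∈ Set.Icc b (1 - b) → 1 ≤ (n : ℝ) * b →
      (∀ i, MemLp (Z i) 2 P) →
      (∀ i j : ℕ, |cov' P (Z i) (Z j)| ≤ K * (max |(i : ℝ) - (j : ℝ)| 1) ^ (-(3 : ℝ))) →
      (∀ i, |w i| ≤ C / ((n : ℝ) * b)) →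
      (∀ i : ℕ, b < |(i : ℝ) / n - u| → w i = 0) →
      cov' P (fun ω => ∑ i ∈ Finset.Icc 1 n, w i * Z i ω)
          (fun ω => ∑ i ∈ Finset.Icc 1 n, w i * Z i ω)
        ≤ C' / ((n : ℝ) * b) := by
  set ρ : ℤ → ℝ := fun k => |K| * (max |(k : ℝ)| 1) ^ (-(3 : ℝ))
  refine ⟨3 * C ^ 2 * ∑' k, ρ k, ?_⟩
  intro Ω _ P _ n b u Z w hn hb _ _ hnb hZ hcov hw hsupp
  simp only [cov'_eq_covariance] at hcov ⊢
  have hn0 : (0 : ℝ) < n := by exact_mod_cast hn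
  have hW : 0 ≤ C / (n * b) := (abs_nonneg _).trans (hw 0)
  have hρ0 : 0 ≤ ρ := fun k => by positivity
  have hcovρ : ∀ i j : ℕ, |cov[Z i, Z j; P]| ≤ ρ (j - i) := fun i j => by
    refine (hcov i j).trans ?_
    simp only [ρ, Int.cast_sub, Int.cast_natCast, abs_sub_comm (j : ℝ)]
    gcongr
    exact le_abs_self K
  have hweights : ∑ i ∈ Icc 1 n, |w i| ≤ (n * (u + b) - n * (u - b) + 1) * (C / (n * b)) :=
    sum_abs_le_of_eq_zero_of_notMem_Icc (by nlinarith) hw fun i hi =>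
      hsupp i (not_le.1 fun h => hi (mem_Icc_of_abs_div_sub_le hn0 h))
  calc cov[fun ω => ∑ i ∈ Icc 1 n, w i * Z i ω, fun ω => ∑ i ∈ Icc 1 n, w i * Z i ω; P]
      ≤ (∑ i ∈ Icc 1 n, |w i|) * (C / (n * b)) * ∑' k, ρ k :=
        covariance_weighted_sum_self_le (fun i _ => hZ i)
          ((summable_max_abs_one_rpow_neg (by norm_num)).mul_left |K|) hρ0 hcovρ hw
    _ ≤ 3 * (n * b) * (C / (n * b)) * (C / (n * b)) * ∑' k, ρ k := by
        gcongr
        nlinarith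
    _ = 3 * C ^ 2 * (∑' k, ρ k) / (n * b) := by field_simp

/-- Variance bound for a localized weighted sum: if `|Cov(Z_i, Z_j)| ≤ K (|i-j| ∨ 1)^{-3}` and
the weights satisfy `|w_i| ≤ C/(nb)` with support `|i/n - u| ≤ b`, then
`Var(Σ_i w_i Z_i) ≤ C'/(nb)` with `C'` depending only on `C` and `K`. -/
theorem localized_variance_bound (C K : ℝ) (hC : 0 ≤ C) (hK : 0 ≤ K) :
    ∃ C' : ℝ, ∀ (Ω : Type) [MeasurableSpace Ω] (P : Measure Ω), IsProbabilityMeasure P →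
      ∀ (n : ℕ) (b u : ℝ) (Z : ℕ → Ω → ℝ) (w : ℕ → ℝ),
      1 ≤ n → 0 < b → b < 1 → u ∈ Set.Icc b (1 - b) → 1 ≤ (n : ℝ) * b →
      (∀ i, MemLp (Z i) 2 P) →
      (∀ i j : ℕ, |cov' P (Z i) (Z j)| ≤ K * (max |(i : ℝ) - (j : ℝ)| 1) ^ (-(3 : ℝ))) →
      (∀ i, |w i| ≤ C / ((n : ℝ) * b)) →
      (∀ i : ℕ, b < |(i : ℝ) / n - u| → w i = 0) →
      cov' P (fun ω => ∑ i ∈ Finset.Icc 1 n, w i * Z i ω)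
          (fun ω => ∑ i ∈ Finset.Icc 1 n, w i * Z i ω)
        ≤ C' / ((n : ℝ) * b) :=
  localized_variance_bound_general C K
end
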